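/- arXiv:2308.16363 — 2 statements merged into one kernel-verified Lean document; each statement's English description precedes it below -/
import Mathlib

section
/- In a CD neighborhood graph with degout(v) ≥ 1 and degin(v) + n_K ≥ 1 in which every J-type vertex cites all of v's out-neighbors (i.e. degout(j) = degout(v) + 1 for every j ∈ J), the normalized betweenness equals the proportion of I-type vertices and exceeds the CD Index by exactly the proportion of J-type vertices: B(v)/(degout(v)·(degin(v) + n_K)) = n_I/(degin(v) + n_K), and B(v)/(degout(v)·(degin(v) + n_K)) − (n_I − n_J)/(n_I + n_J + n_K) = n_J/(degin(v) + n_K). -/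
/-!
A walk with two edges in a CD graph must be `a → v → t` with `a ∈ I ∪ J` and `t ∈ T`, and
cannot be extended. So `v` is interior only to the paths `[s, v, t]` with `s ∈ I ∪ J`,
`t ∈ T`. For `s ∈ I` this is the only path from `s` to `t`, contributing `1` to `B(v)`;
for `s ∈ J` full citation makes `s → t` an edge, so `[s, v, t]` is not shortest.
Hence `B(v) = n_I · degout(v)`, and both identities follow by arithmetic.
-/

open Finset

variable {V : Type*}

/-- `l` is a directed path from `s` to `t` in the directed graph with adjacency
relation `adj`: consecutive vertices are joined by edges, it starts at `s`,
ends at `t`, and has no repeated vertices. -/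
def IsDirPath (adj : V → V → Prop) (s t : V) (l : List V) : Prop :=
  l.Chain' adj ∧ l.head? = some s ∧ l.getLast? = some t ∧ l.Nodup

/-- `l` is a shortest directed path from `s` to `t`. -/
def IsShortestDirPath (adj : V → V → Prop) (s t : V) (l : List V) : Prop :=
  IsDirPath adj s t l ∧ ∀ l', IsDirPath adj s t l' → l.length ≤ l'.length

/-- `x` occurs as an interior vertex of the list `l` (i.e. `x` is a member of `l`
which is neither the first nor the last entry). -/
def ListInterior (l : List V) (x : V) : Prop := x ∈ l.tail.dropLast

/-- `σ(s,t)`: the number of shortest directed paths from `s` to `t`. -/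
noncomputable def numShortest (adj : V → V → Prop) (s t : V) : ℕ :=
  {l : List V | IsShortestDirPath adj s t l}.ncard

/-- `σ(s,t∣x)`: the number of shortest directed paths from `s` to `t` that pass
through `x` as an interior vertex. -/
noncomputable def numShortestThrough (adj : V → V → Prop) (s t x : V) : ℕ :=
  {l : List V | IsShortestDirPath adj s t l ∧ ListInterior l x}.ncard

/-- A CD Index neighborhood graph: a directed graph whose vertex set is the
disjoint union `{v} ∪ I ∪ J ∪ K ∪ T` of the focal vertex `v` and four pairwise
disjoint finite sets, with the edge structure of the CD Index neighborhood. -/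
structure CDGraph (V : Type*) where
  /-- the adjacency relation: `adj u w` means there is a directed edge `u → w` -/
  adj : V → V → Prop
  /-- the focal vertex -/
  v : V
  /-- the set of `I`-type vertices -/
  I : Finset V
  /-- the set of `J`-type vertices -/
  J : Finset V
  /-- the set of `K`-type vertices -/
  K : Finset V
  /-- the set of vertices cited by `v` -/
  T : Finset V
  v_not_I : v ∉ I
  v_not_J : v ∉ J
  v_not_K : v ∉ K
  v_not_T : v ∉ T
  disj_IJ : Disjoint I J
  disj_IK : Disjoint I K
  disj_IT : Disjoint I T
  disj_JK : Disjoint J K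
  disj_JT : Disjoint J T
  disj_KT : Disjoint K T
  /-- every vertex is `v` or belongs to one of `I`, `J`, `K`, `T` -/
  cover : ∀ x : V, x = v ∨ x ∈ I ∨ x ∈ J ∨ x ∈ K ∨ x ∈ T
  /-- `v` has an out-edge to each element of `T` and no other out-edges -/
  v_out : ∀ w, adj v w ↔ w ∈ T
  /-- each `i ∈ I` has exactly one out-edge, namely to `v` -/
  I_out : ∀ i ∈ I, ∀ w, adj i w ↔ w = v
  /-- each `j ∈ J` has an out-edge to `v` -/
  J_cites_v : ∀ j ∈ J, adj j v
  /-- each `j ∈ J` has at least one out-edge into `T` -/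
  J_cites_T : ∀ j ∈ J, ∃ t ∈ T, adj j t
  /-- every out-edge of `j ∈ J` goes to `{v} ∪ T` -/
  J_out : ∀ j ∈ J, ∀ w, adj j w → w = v ∨ w ∈ T
  /-- each `k ∈ K` has at least one out-edge -/
  K_cites : ∀ k ∈ K, ∃ w, adj k w
  /-- every out-edge of `k ∈ K` goes into `T` -/
  K_out : ∀ k ∈ K, ∀ w, adj k w → w ∈ T
  /-- vertices in `T` have no out-edges -/
  T_out : ∀ t ∈ T, ∀ w, ¬ adj t w

/-- The out-degree of a vertex `u`: the number of out-neighbors of `u`. -/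
noncomputable def CDGraph.degout (G : CDGraph V) (u : V) : ℕ :=
  {w | G.adj u w}.ncard

/-- The in-degree of the focal vertex `v`, namely `n_I + n_J`. -/
def CDGraph.degin (G : CDGraph V) : ℕ := G.I.card + G.J.card

/-- The raw betweenness of the focal vertex `v`:
`B(v) = Σ_{s ≠ v} Σ_{t ≠ v} σ(s,t∣v)/σ(s,t)`, where terms with `σ(s,t) = 0`
count as `0` (division by zero in `ℝ` yields `0`). -/
noncomputable def CDGraph.B [Fintype V] [DecidableEq V] (G : CDGraph V) : ℝ :=
  ∑ s ∈ univ.erase G.v, ∑ t ∈ univ.erase G.v,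
    (numShortestThrough G.adj s t G.v : ℝ) / (numShortest G.adj s t : ℝ)

section DirPath

variable {adj : V → V → Prop} {s t : V}

lemma isDirPath_pair (h : adj s t) (hst : s ≠ t) : IsDirPath adj s t [s, t] :=
  ⟨List.isChain_pair.mpr h, rfl, rfl, by simp [hst]⟩

lemma isDirPath_triple {x : V} (hsx : adj s x) (hxt : adj x t) (hnd : [s, x, t].Nodup) :
    IsDirPath adj s t [s, x, t] :=
  ⟨List.isChain_cons_cons.mpr ⟨hsx, List.isChain_pair.mpr hxt⟩, rfl, rfl, hnd⟩

lemma IsShortestDirPath.length_le_two {l : List V} (hl : IsShortestDirPath adj s t l)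
    (h : adj s t) (hst : s ≠ t) : l.length ≤ 2 :=
  hl.2 _ (isDirPath_pair h hst)

lemma setOf_isShortestDirPath_eq_singleton {p : List V}
    (h : ∀ l, IsDirPath adj s t l ↔ l = p) : {l | IsShortestDirPath adj s t l} = {p} := by
  ext l
  simp only [Set.mem_ofPred_eq, Set.mem_singleton_iff, IsShortestDirPath, h]
  constructor
  · exact And.left
  · rintro rfl
    exact ⟨rfl, fun l' hl' => (congrArg List.length hl').ge⟩

end DirPath

namespace CDGraph

variable (G : CDGraph V)

lemma degout_v_eq_card_T : G.degout G.v = G.T.card := by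
  rw [degout, show {w | G.adj G.v w} = G.T from Set.ext G.v_out, Set.ncard_coe_finset]

variable {G}

lemma mem_I_or_mem_J_of_adj_v {a : V} (h : G.adj a G.v) : a ∈ G.I ∨ a ∈ G.J := by
  rcases G.cover a with rfl | hI | hJ | hK | hT
  · exact absurd ((G.v_out _).mp h) G.v_not_T
  · exact .inl hI
  · exact .inr hJ
  · exact absurd (G.K_out a hK _ h) G.v_not_T
  · exact absurd h (G.T_out a hT _)

lemma eq_v_of_adj_of_adj {a b c : V} (hab : G.adj a b) (hbc : G.adj b c) : b = G.v := by
  have hbT : b ∉ G.T := fun hb => G.T_out b hb c hbc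
  rcases G.cover a with rfl | hI | hJ | hK | hT
  · exact absurd ((G.v_out b).mp hab) hbT
  · exact (G.I_out a hI b).mp hab
  · exact (G.J_out a hJ b hab).resolve_right hbT
  · exact absurd (G.K_out a hK b hab) hbT
  · exact absurd hab (G.T_out a hT b)

lemma of_isChain_cons_cons_cons {a b c : V} {r : List V}
    (h : (a :: b :: c :: r).IsChain G.adj) :
    (a ∈ G.I ∨ a ∈ G.J) ∧ b = G.v ∧ c ∈ G.T ∧ r = [] := by
  simp only [List.isChain_cons_cons] at h
  obtain ⟨hab, hbc, hr⟩ := h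
  obtain rfl := eq_v_of_adj_of_adj hab hbc
  have hcT := (G.v_out c).mp hbc
  refine ⟨mem_I_or_mem_J_of_adj_v hab, rfl, hcT, ?_⟩
  rcases r with _ | ⟨d, r⟩
  · rfl
  · exact absurd (List.isChain_cons_cons.mp hr).1 (G.T_out c hcT d)

lemma eq_triple_of_listInterior {s t : V} {l : List V} (hl : IsDirPath G.adj s t l)
    (hv : ListInterior l G.v) : (s ∈ G.I ∨ s ∈ G.J) ∧ t ∈ G.T ∧ l = [s, G.v, t] := by
  obtain ⟨hc, hh, hlast, -⟩ := hl
  match l, hv with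
  | a :: b :: c :: r, _ =>
    obtain ⟨ha, rfl, hcT, rfl⟩ := of_isChain_cons_cons_cons hc
    obtain rfl : a = s := by simpa using hh
    obtain rfl : c = t := by simpa using hlast
    exact ⟨ha, hcT, rfl⟩

lemma isDirPath_iff_of_mem_I_of_mem_T {s t : V} (hs : s ∈ G.I) (ht : t ∈ G.T) {l : List V} :
    IsDirPath G.adj s t l ↔ l = [s, G.v, t] := by
  have hsv : s ≠ G.v := fun h => G.v_not_I (h ▸ hs)
  have hst : s ≠ t := fun h => disjoint_left.mp G.disj_IT hs (h ▸ ht)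
  have hvt : G.v ≠ t := fun h => G.v_not_T (h ▸ ht)
  constructor
  · rintro hl
    obtain ⟨hc, hh, hlast, -⟩ := hl
    match l with
    | [] => simp at hh
    | [a] =>
      obtain rfl : a = s := by simpa using hh
      exact absurd (by simpa using hlast) hst
    | [a, b] =>
      obtain rfl : a = s := by simpa using hh
      obtain rfl : b = t := by simpa using hlast
      exact absurd ((G.I_out a hs b).mp (List.isChain_pair.mp hc)).symm hvt
    | a :: b :: c :: r =>
      obtain ⟨-, rfl, -, rfl⟩ := of_isChain_cons_cons_cons hc
      obtain rfl : a = s := by simpa using hh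
      obtain rfl : c = t := by simpa using hlast
      rfl
  · rintro rfl
    exact isDirPath_triple ((G.I_out s hs G.v).mpr rfl) ((G.v_out t).mpr ht) (by simp [*])

lemma adj_of_mem_J_of_mem_T {j t : V} (hj : j ∈ G.J) (hdeg : G.degout j = G.degout G.v + 1)
    (ht : t ∈ G.T) : G.adj j t := by
  have hsub : {w | G.adj j w} ⊆ insert G.v ↑G.T := G.J_out j hj
  have hcard : (insert G.v (G.T : Set V)).ncard ≤ {w | G.adj j w}.ncard := by
    rw [Set.ncard_insert_of_notMem (by simpa using G.v_not_T), Set.ncard_coe_finset,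
      ← degout_v_eq_card_T]
    exact hdeg.ge
  have heq := Set.eq_of_subset_of_ncard_le hsub hcard (G.T.finite_toSet.insert G.v)
  exact (heq ▸ Set.mem_insert_of_mem _ ht : t ∈ {w | G.adj j w})

lemma numShortest_of_mem_I_of_mem_T {s t : V} (hs : s ∈ G.I) (ht : t ∈ G.T) :
    numShortest G.adj s t = 1 := by
  rw [numShortest, setOf_isShortestDirPath_eq_singleton
    (fun _ => isDirPath_iff_of_mem_I_of_mem_T hs ht), Set.ncard_singleton]

lemma numShortestThrough_v_of_mem_I_of_mem_T {s t : V} (hs : s ∈ G.I) (ht : t ∈ G.T) :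
    numShortestThrough G.adj s t G.v = 1 := by
  have hset : {l | IsShortestDirPath G.adj s t l ∧ ListInterior l G.v} = {[s, G.v, t]} := by
    rw [Set.ofPred_and, setOf_isShortestDirPath_eq_singleton
      (fun _ => isDirPath_iff_of_mem_I_of_mem_T hs ht)]
    exact Set.singleton_inter_of_mem (by simp [ListInterior])
  rw [numShortestThrough, hset, Set.ncard_singleton]

lemma numShortestThrough_v_eq_zero (hJfull : ∀ j ∈ G.J, G.degout j = G.degout G.v + 1)
    {s t : V} (h : ¬(s ∈ G.I ∧ t ∈ G.T)) : numShortestThrough G.adj s t G.v = 0 := by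
  refine (congrArg Set.ncard (Set.eq_empty_iff_forall_notMem.mpr ?_)).trans (Set.ncard_empty _)
  rintro l ⟨hl, hv⟩
  obtain ⟨hs | hs, ht, rfl⟩ := eq_triple_of_listInterior hl.1 hv
  · exact h ⟨hs, ht⟩
  · have hst : s ≠ t := fun h => disjoint_left.mp G.disj_JT hs (h ▸ ht)
    have := hl.length_le_two (adj_of_mem_J_of_mem_T hs (hJfull s hs) ht) hst
    simp at this

lemma B_eq_card_I_mul_card_T [Fintype V] [DecidableEq V]
    (hJfull : ∀ j ∈ G.J, G.degout j = G.degout G.v + 1) :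
    G.B = G.I.card * G.T.card := by
  have hterm : ∀ s t, (numShortestThrough G.adj s t G.v : ℝ) / numShortest G.adj s t =
      if s ∈ G.I then if t ∈ G.T then 1 else 0 else 0 := fun s t => by
    by_cases hst : s ∈ G.I ∧ t ∈ G.T
    · simp [numShortest_of_mem_I_of_mem_T hst.1 hst.2,
        numShortestThrough_v_of_mem_I_of_mem_T hst.1 hst.2, hst]
    · rw [numShortestThrough_v_eq_zero hJfull hst]
      grind
  have hI : (univ.erase G.v) ∩ G.I = G.I := by simp [G.v_not_I]
  have hT : (univ.erase G.v) ∩ G.T = G.T := by simp [G.v_not_T]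
  simp only [B, hterm]
  simp [sum_ite_mem, hI, hT]

end CDGraph

theorem cd_betweenness_full_J_citation_general [Fintype V] [DecidableEq V] (G : CDGraph V)
    (h1 : 1 ≤ G.degout G.v)
    (hJfull : ∀ j ∈ G.J, G.degout j = G.degout G.v + 1) :
    G.B / ((G.degout G.v : ℝ) * ((G.degin : ℝ) + (G.K.card : ℝ)))
        = (G.I.card : ℝ) / ((G.degin : ℝ) + (G.K.card : ℝ)) ∧
    G.B / ((G.degout G.v : ℝ) * ((G.degin : ℝ) + (G.K.card : ℝ)))
        - ((G.I.card : ℝ) - (G.J.card : ℝ))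
            / ((G.I.card : ℝ) + (G.J.card : ℝ) + (G.K.card : ℝ))
      = (G.J.card : ℝ) / ((G.degin : ℝ) + (G.K.card : ℝ)) := by
  have hB : G.B = G.degout G.v * G.I.card := by
    rw [G.B_eq_card_I_mul_card_T hJfull, G.degout_v_eq_card_T, mul_comm]
  have hd : (G.degout G.v : ℝ) ≠ 0 := Nat.cast_ne_zero.mpr (Nat.one_le_iff_ne_zero.mp h1)
  have hnormalized : G.B / (G.degout G.v * (G.degin + G.K.card))
      = G.I.card / (G.degin + G.K.card) := by
    rw [hB, mul_div_mul_left _ _ hd]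
  refine ⟨hnormalized, ?_⟩
  rw [hnormalized, CDGraph.degin, Nat.cast_add, div_sub_div_same]
  congr 1
  ring

/-- In a CD neighborhood graph with `degout(v) ≥ 1` and
`degin(v) + n_K ≥ 1` in which every `J`-type vertex cites all of `v`'s
out-neighbors (i.e. `degout(j) = degout(v) + 1` for every `j ∈ J`), the normalized
betweenness equals the proportion of `I`-type vertices and exceeds the CD Index by
exactly the proportion of `J`-type vertices:
`B(v)/(degout(v)·(degin(v) + n_K)) = n_I/(degin(v) + n_K)`, and
`B(v)/(degout(v)·(degin(v) + n_K)) − (n_I − n_J)/(n_I + n_J + n_K)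
  = n_J/(degin(v) + n_K)`. -/
theorem cd_betweenness_full_J_citation [Fintype V] [DecidableEq V] (G : CDGraph V)
    (h1 : 1 ≤ G.degout G.v) (h2 : 1 ≤ G.degin + G.K.card)
    (hJfull : ∀ j ∈ G.J, G.degout j = G.degout G.v + 1) :
    G.B / ((G.degout G.v : ℝ) * ((G.degin : ℝ) + (G.K.card : ℝ)))
        = (G.I.card : ℝ) / ((G.degin : ℝ) + (G.K.card : ℝ)) ∧
    G.B / ((G.degout G.v : ℝ) * ((G.degin : ℝ) + (G.K.card : ℝ)))
        - ((G.I.card : ℝ) - (G.J.card : ℝ))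
            / ((G.I.card : ℝ) + (G.J.card : ℝ) + (G.K.card : ℝ))
      = (G.J.card : ℝ) / ((G.degin : ℝ) + (G.K.card : ℝ)) :=
  cd_betweenness_full_J_citation_general G h1 hJfull
end

section
/- In a CD neighborhood graph with degout(v) ≥ 1 and degin(v) ≥ 1, if the normalized betweenness attains its maximal value, B(v)/(degout(v)·(degin(v) + n_K)) = 1, then K = ∅ and J = ∅, and consequently the CD Index also attains its maximal value: D(v) = (n_I − n_J)/(n_I + n_J + n_K) = 1. -/
open Finset

variable {V : Type*}

/-! Every vertex other than `v` reaches any target in at most two steps, so `v` lies on a shortest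
path from `s` to `t` exactly when `s → v → t` is a path and `s → t` is not an edge; that shortest
path is then unique. Hence `B(v)` counts the pairs `(s, t) ∈ (I ∪ J) × T` with no edge `s → t`.
Each `j ∈ J` cites some element of `T`, so `B(v) + n_J ≤ degout(v) · degin(v)`, and
`B(v) = degout(v) · (degin(v) + n_K)` forces `n_J = n_K = 0`. -/

theorem isShortestDirPath_iff_eq_of_forall_isDirPath_eq {adj : V → V → Prop} {s t : V}
    {p : List V} (hp : IsDirPath adj s t p) (huniq : ∀ l, IsDirPath adj s t l → l = p)
    (l : List V) : IsShortestDirPath adj s t l ↔ l = p := by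
  refine ⟨fun h => huniq l h.1, ?_⟩
  rintro rfl
  exact ⟨hp, fun l' hl' => by rw [huniq l' hl']⟩

namespace CDGraph

variable (G : CDGraph V)

theorem degout_v : G.degout G.v = #G.T := by
  rw [degout, ← Set.ncard_coe_finset]
  exact congrArg Set.ncard (Set.ext G.v_out)

theorem not_adj_v_v : ¬ G.adj G.v G.v := fun h => G.v_not_T ((G.v_out G.v).mp h)

theorem adj_v_iff {s : V} : G.adj s G.v ↔ s ∈ G.I ∨ s ∈ G.J := by
  refine ⟨fun h => ?_, ?_⟩
  · rcases G.cover s with rfl | hI | hJ | hK | hT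
    · exact absurd h G.not_adj_v_v
    · exact Or.inl hI
    · exact Or.inr hJ
    · exact absurd (G.K_out s hK G.v h) G.v_not_T
    · exact absurd h (G.T_out _ hT G.v)
  · rintro (hI | hJ)
    · exact (G.I_out s hI G.v).mpr rfl
    · exact G.J_cites_v s hJ

theorem eq_v_or_mem_T_of_adj {s x : V} (hs : s ≠ G.v) (h : G.adj s x) : x = G.v ∨ x ∈ G.T := by
  rcases G.cover s with rfl | hI | hJ | hK | hT
  · exact absurd rfl hs
  · exact Or.inl ((G.I_out s hI x).mp h)
  · exact G.J_out s hJ x h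
  · exact Or.inr (G.K_out s hK x h)
  · exact absurd h (G.T_out _ hT x)

theorem isDirPath_cases {s t : V} {l : List V} (hs : s ≠ G.v) (h : IsDirPath G.adj s t l) :
    (l = [s] ∧ s = t) ∨ (l = [s, t] ∧ G.adj s t) ∨
      (l = [s, G.v, t] ∧ G.adj s G.v ∧ G.adj G.v t) := by
  obtain ⟨hc, hh, hl, -⟩ := h
  rcases l with - | ⟨a, - | ⟨b, - | ⟨c, r⟩⟩⟩
  · simp at hh
  · obtain ⟨rfl, rfl⟩ : a = s ∧ a = t := ⟨by simpa using hh, by simpa using hl⟩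
    exact Or.inl ⟨rfl, rfl⟩
  · obtain ⟨rfl, rfl⟩ : a = s ∧ b = t := ⟨by simpa using hh, by simpa using hl⟩
    exact Or.inr (Or.inl ⟨rfl, List.isChain_pair.mp hc⟩)
  · obtain rfl : a = s := by simpa using hh
    obtain ⟨hsb, hc⟩ := List.isChain_cons_cons.mp hc
    obtain ⟨hbc, hcr⟩ := List.isChain_cons_cons.mp hc
    rcases G.eq_v_or_mem_T_of_adj hs hsb with rfl | hbT
    · have hcT : c ∈ G.T := (G.v_out c).mp hbc
      rcases r with - | ⟨d, r⟩
      · obtain rfl : c = t := by simpa using hl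
        exact Or.inr (Or.inr ⟨rfl, hsb, hbc⟩)
      · exact absurd (List.isChain_cons_cons.mp hcr).1 (G.T_out _ hcT d)
    · exact absurd hbc (G.T_out _ hbT c)

/-- The pairs `(s, t)` for which `v` is an interior vertex of the (unique) shortest path. -/
noncomputable def brokeredPairs : Finset (V × V) :=
  open Classical in {p ∈ (G.I ∪ G.J) ×ˢ G.T | ¬ G.adj p.1 p.2}

theorem mem_brokeredPairs {s t : V} :
    (s, t) ∈ G.brokeredPairs ↔ G.adj s G.v ∧ G.adj G.v t ∧ ¬ G.adj s t := by
  unfold brokeredPairs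
  simp only [mem_filter, mem_product, mem_union, G.adj_v_iff, G.v_out, and_assoc]

theorem isShortestDirPath_iff_of_mem_brokeredPairs {s t : V} (h : (s, t) ∈ G.brokeredPairs)
    (l : List V) : IsShortestDirPath G.adj s t l ↔ l = [s, G.v, t] := by
  obtain ⟨hsv, hvt, hst⟩ := G.mem_brokeredPairs.mp h
  have ht : t ∈ G.T := (G.v_out t).mp hvt
  have hs : s ≠ G.v := by rintro rfl; exact G.not_adj_v_v hsv
  have hs_ne_t : s ≠ t := by rintro rfl; exact G.T_out _ ht G.v hsv
  have hv_ne_t : G.v ≠ t := by rintro rfl; exact G.v_not_T ht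
  refine isShortestDirPath_iff_eq_of_forall_isDirPath_eq ?_ (fun l hl => ?_) l
  · exact ⟨List.isChain_cons_cons.mpr ⟨hsv, List.isChain_pair.mpr hvt⟩, rfl, rfl,
      by simp [hs, hs_ne_t, hv_ne_t]⟩
  · rcases G.isDirPath_cases hs hl with ⟨-, rfl⟩ | ⟨-, hadj⟩ | ⟨rfl, -⟩
    · exact absurd rfl hs_ne_t
    · exact absurd hadj hst
    · rfl

theorem numShortest_of_mem_brokeredPairs {s t : V} (h : (s, t) ∈ G.brokeredPairs) :
    numShortest G.adj s t = 1 := by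
  rw [numShortest, Set.ncard_eq_one]
  exact ⟨_, Set.ext (G.isShortestDirPath_iff_of_mem_brokeredPairs h)⟩

theorem numShortestThrough_of_mem_brokeredPairs {s t : V} (h : (s, t) ∈ G.brokeredPairs) :
    numShortestThrough G.adj s t G.v = 1 := by
  rw [numShortestThrough, Set.ncard_eq_one]
  refine ⟨[s, G.v, t], Set.ext fun l => ?_⟩
  simp only [Set.mem_ofPred_eq, Set.mem_singleton_iff,
    G.isShortestDirPath_iff_of_mem_brokeredPairs h]
  exact ⟨And.left, fun hl => ⟨hl, by simp [hl, ListInterior]⟩⟩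

theorem mem_brokeredPairs_of_isShortestDirPath {s t : V} {l : List V} (hs : s ≠ G.v)
    (h : IsShortestDirPath G.adj s t l) (hv : ListInterior l G.v) : (s, t) ∈ G.brokeredPairs := by
  rcases G.isDirPath_cases hs h.1 with ⟨rfl, -⟩ | ⟨rfl, -⟩ | ⟨rfl, hsv, hvt⟩
  · simp [ListInterior] at hv
  · simp [ListInterior] at hv
  · refine G.mem_brokeredPairs.mpr ⟨hsv, hvt, fun hst => ?_⟩
    have hs_ne_t : s ≠ t := by
      have := h.1.2.2.2
      simp_all
    -- the edge `s → t` would give a path shorter than `[s, v, t]`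
    simpa using h.2 [s, t] ⟨List.isChain_pair.mpr hst, rfl, rfl, by simp [hs_ne_t]⟩

theorem numShortestThrough_of_not_mem_brokeredPairs {s t : V} (hs : s ≠ G.v)
    (h : (s, t) ∉ G.brokeredPairs) : numShortestThrough G.adj s t G.v = 0 := by
  rw [numShortestThrough, ← Set.ncard_empty (List V)]
  exact congrArg Set.ncard (Set.eq_empty_of_forall_notMem fun l hl =>
    h (G.mem_brokeredPairs_of_isShortestDirPath hs hl.1 hl.2))

theorem B_eq_card_brokeredPairs [Fintype V] [DecidableEq V] : G.B = #G.brokeredPairs := by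
  have hsub : G.brokeredPairs ⊆ univ.erase G.v ×ˢ univ.erase G.v := by
    intro ⟨s, t⟩ h
    obtain ⟨hsv, hvt, -⟩ := G.mem_brokeredPairs.mp h
    simp only [mem_product, mem_erase, mem_univ, and_true]
    exact ⟨fun hs => G.not_adj_v_v (hs ▸ hsv), fun ht => G.not_adj_v_v (ht ▸ hvt)⟩
  rw [B, ← sum_product', ← sum_subset hsub, card_eq_sum_ones, Nat.cast_sum]
  · refine sum_congr rfl fun p hp => ?_
    rw [G.numShortest_of_mem_brokeredPairs hp, G.numShortestThrough_of_mem_brokeredPairs hp]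
    simp
  · intro p hp hnot
    rw [G.numShortestThrough_of_not_mem_brokeredPairs (mem_erase.mp (mem_product.mp hp).1).1 hnot]
    simp

/-- Each `j ∈ J` cites some `t ∈ T`, and such a pair `(j, t)` is not brokered. -/
theorem card_brokeredPairs_add_card_J_le :
    #G.brokeredPairs + #G.J ≤ (#G.I + #G.J) * #G.T := by
  classical
  set P := {p ∈ G.J ×ˢ G.T | G.adj p.1 p.2}
  have hJP : #G.J ≤ #P := card_le_card_of_surjOn Prod.fst fun j hj => by
    obtain ⟨t, ht, hjt⟩ := G.J_cites_T j hj
    exact ⟨(j, t), by simp [P, mem_coe.mp hj, ht, hjt], rfl⟩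
  have hdisj : Disjoint G.brokeredPairs P := disjoint_left.mpr fun p hS hP =>
    (G.mem_brokeredPairs.mp hS).2.2 (mem_filter.mp hP).2
  have hsub : G.brokeredPairs ∪ P ⊆ (G.I ∪ G.J) ×ˢ G.T := by
    refine union_subset (filter_subset _ _) ?_
    exact (filter_subset _ _).trans (product_subset_product_left subset_union_right)
  calc #G.brokeredPairs + #G.J ≤ #G.brokeredPairs + #P := Nat.add_le_add_left hJP _
    _ = #(G.brokeredPairs ∪ P) := (card_union_of_disjoint hdisj).symm
    _ ≤ #((G.I ∪ G.J) ×ˢ G.T) := card_le_card hsub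
    _ = (#G.I + #G.J) * #G.T := by rw [card_product, card_union_of_disjoint G.disj_IJ]

end CDGraph

theorem cd_betweenness_max_implies_cd_max_general [Fintype V] [DecidableEq V] (G : CDGraph V)
    (hmax : G.B / ((G.degout G.v : ℝ) * ((G.degin : ℝ) + (G.K.card : ℝ))) = 1) :
    G.K = ∅ ∧ G.J = ∅ ∧
    ((G.I.card : ℝ) - (G.J.card : ℝ))
        / ((G.I.card : ℝ) + (G.J.card : ℝ) + (G.K.card : ℝ)) = 1 := by
  rw [G.B_eq_card_brokeredPairs, G.degout_v, CDGraph.degin] at hmax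
  push_cast at hmax
  have hd : (#G.T : ℝ) * (#G.I + #G.J + #G.K) ≠ 0 := by
    rintro h
    rw [h, div_zero] at hmax
    exact zero_ne_one hmax
  have hB : #G.brokeredPairs = #G.T * (#G.I + #G.J + #G.K) := by
    exact_mod_cast (div_eq_one_iff_eq hd).mp hmax
  obtain ⟨hT, hIJK⟩ := mul_ne_zero_iff.mp hd
  have hTpos : 0 < #G.T := Nat.pos_of_ne_zero (by exact_mod_cast hT)
  have hle := G.card_brokeredPairs_add_card_J_le
  have hJ : #G.J = 0 := by nlinarith
  have hK : #G.K = 0 := by nlinarith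
  have hI : (#G.I : ℝ) ≠ 0 := by simpa [hJ, hK] using hIJK
  refine ⟨card_eq_zero.mp hK, card_eq_zero.mp hJ, ?_⟩
  rw [hJ, hK, Nat.cast_zero, sub_zero, add_zero, add_zero, div_self hI]

/-- In a CD neighborhood graph with `degout(v) ≥ 1` and
`degin(v) ≥ 1`, if the normalized betweenness attains its maximal value,
`B(v)/(degout(v)·(degin(v) + n_K)) = 1`, then `K = ∅` and `J = ∅`, and consequently
the CD Index also attains its maximal value:
`D(v) = (n_I − n_J)/(n_I + n_J + n_K) = 1`. -/
theorem cd_betweenness_max_implies_cd_max [Fintype V] [DecidableEq V] (G : CDGraph V)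
    (h1 : 1 ≤ G.degout G.v) (h2 : 1 ≤ G.degin)
    (hmax : G.B / ((G.degout G.v : ℝ) * ((G.degin : ℝ) + (G.K.card : ℝ))) = 1) :
    G.K = ∅ ∧ G.J = ∅ ∧
    ((G.I.card : ℝ) - (G.J.card : ℝ))
        / ((G.I.card : ℝ) + (G.J.card : ℝ) + (G.K.card : ℝ)) = 1 :=
  cd_betweenness_max_implies_cd_max_general G hmax
end
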